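/- arXiv:2510.13868 — 4 statements merged into one kernel-verified Lean document; each statement's English description precedes it below -/
import Mathlib

section
/- Weak duality for discrete optimal stopping: for every 𝓕-martingale M = (M_n)_{n=0}^N and every index 0 ≤ n ≤ N, the Snell envelope satisfies Y*_n ≤ 𝔼[ max_{n ≤ m ≤ N} (G_m − M_m + M_n) | 𝓕_n ] ℙ-almost surely. -/
open MeasureTheory Filter

/-!
Writing `H k := max_{k ≤ m ≤ N} (G m - M m)`, one shows `Y k ≤ 𝔼[H k | ℱ k] + M k` by backward
induction on `k`. At `k = N` this is an equality. For `k < N`, the bound `G k - M k ≤ H k` handles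
the first branch of the Snell recursion; for the continuation branch, conditioning the bound at
`k + 1` on `ℱ k`, using the tower property, `𝔼[M (k + 1) | ℱ k] = M k` and `H (k + 1) ≤ H k` gives
`𝔼[Y (k + 1) | ℱ k] ≤ 𝔼[H k | ℱ k] + M k`. Since `M n` is `ℱ n`-measurable it can be moved inside
the conditional expectation, which is the claimed form.
-/

/-- A finite-horizon martingale with respect to the filtration `ℱ` up to time `N`:
an adapted, integrable process with the one-step martingale property. -/
def IsFinMartingale {Ω : Type*} {m0 : MeasurableSpace Ω} (μ : Measure Ω)
    (ℱ : Filtration ℕ m0) (N : ℕ) (M : ℕ → Ω → ℝ) : Prop :=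
  (∀ n, n ≤ N → StronglyMeasurable[ℱ n] (M n)) ∧
  (∀ n, n ≤ N → Integrable (M n) μ) ∧
  ∀ n, n < N → μ[M (n + 1)|ℱ n] =ᵐ[μ] M n

theorem MeasureTheory.Integrable.finset_sup' {Ω ι β : Type*} {m0 : MeasurableSpace Ω}
    {μ : Measure Ω} [NormedAddCommGroup β] [Lattice β] [HasSolidNorm β] [IsOrderedAddMonoid β]
    {s : Finset ι} (hs : s.Nonempty) {f : ι → Ω → β} (hf : ∀ i ∈ s, Integrable (f i) μ) :
    Integrable (fun ω => s.sup' hs fun i => f i ω) μ := by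
  simpa only [← Finset.sup'_apply] using
    Finset.sup'_induction hs f (p := fun g => Integrable g μ) (fun _ h₁ _ h₂ => h₁.sup h₂) hf

theorem IsFinMartingale.integrable_sup'_sub {Ω : Type*} {m0 : MeasurableSpace Ω}
    {μ : Measure Ω} {ℱ : Filtration ℕ m0} {N : ℕ} {G M : ℕ → Ω → ℝ}
    (hM : IsFinMartingale μ ℱ N M) (hG : ∀ n, Integrable (G n) μ) {k : ℕ} (hk : k ≤ N) :
    Integrable (fun ω => (Finset.Icc k N).sup' (Finset.nonempty_Icc.mpr hk)
      (fun m => G m ω - M m ω)) μ :=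
  Integrable.finset_sup' _ fun m hm => (hG m).sub (hM.2.1 m (Finset.mem_Icc.mp hm).2)

section CondExp

variable {Ω : Type*} {m m' m₀ : MeasurableSpace Ω} {μ : Measure Ω}

theorem condExp_add_stronglyMeasurable (hm : m ≤ m₀) [SigmaFinite (μ.trim hm)] {f g : Ω → ℝ}
    (hf : Integrable f μ) (hg : StronglyMeasurable[m] g) (hgi : Integrable g μ) :
    μ[f + g|m] =ᵐ[μ] μ[f|m] + g := by
  filter_upwards [condExp_add hf hgi m] with ω h
  rw [h, Pi.add_apply, Pi.add_apply, condExp_of_stronglyMeasurable hm hg hgi]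

theorem ae_le_condExp_of_stronglyMeasurable (hm : m ≤ m₀) [SigmaFinite (μ.trim hm)]
    {f g : Ω → ℝ} (hf : StronglyMeasurable[m] f) (hfi : Integrable f μ) (hgi : Integrable g μ)
    (hfg : f ≤ᵐ[μ] g) : f ≤ᵐ[μ] μ[g|m] := by
  simpa only [condExp_of_stronglyMeasurable hm hf hfi] using condExp_mono (m := m) hfi hgi hfg

theorem condExp_le_condExp_add_of_martingale_step [IsFiniteMeasure μ] (hmm' : m ≤ m')
    (hm' : m' ≤ m₀) {Y H H' M M' : Ω → ℝ} (hYi : Integrable Y μ) (hHi : Integrable H μ)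
    (hH'i : Integrable H' μ) (hM'i : Integrable M' μ) (hY : Y ≤ᵐ[μ] μ[H'|m'] + M')
    (hH'H : H' ≤ᵐ[μ] H) (hM : μ[M'|m] =ᵐ[μ] M) :
    μ[Y|m] ≤ᵐ[μ] μ[H|m] + M := by
  have hY_le := condExp_mono (m := m) hYi (integrable_condExp.add hM'i) hY
  have h_add := condExp_add (μ := μ) (integrable_condExp (m := m') (f := H')) hM'i m
  have h_tower := condExp_condExp_of_le (μ := μ) (f := H') hmm' hm'
  have h_mono := condExp_mono (m := m) hH'i hHi hH'H
  filter_upwards [hY_le, h_add, h_tower, h_mono, hM] with ω hY_le h_add h_tower h_mono hM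
  calc μ[Y|m] ω ≤ μ[μ[H'|m'] + M'|m] ω := hY_le
    _ = μ[H'|m] ω + M ω := by rw [h_add, Pi.add_apply, h_tower, hM]
    _ ≤ μ[H|m] ω + M ω := add_le_add_left h_mono _

end CondExp

def IsSnellEnvelope {Ω : Type*} {m0 : MeasurableSpace Ω} (μ : Measure Ω)
    (ℱ : Filtration ℕ m0) (N : ℕ) (G Y : ℕ → Ω → ℝ) : Prop :=
  (∀ ω, Y N ω = G N ω) ∧ ∀ n, n < N → ∀ ω, Y n ω = max (G n ω) ((μ[Y (n + 1)|ℱ n]) ω)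

namespace IsSnellEnvelope

variable {Ω : Type*} {m0 : MeasurableSpace Ω} {μ : Measure Ω} {ℱ : Filtration ℕ m0} {N : ℕ}
  {G Y : ℕ → Ω → ℝ}

theorem integrable (hY : IsSnellEnvelope μ ℱ N G Y) (hG : ∀ n, Integrable (G n) μ) {k : ℕ}
    (hk : k ≤ N) : Integrable (Y k) μ := by
  induction hk using Nat.decreasingInduction with
  | self => simpa only [funext hY.1] using hG N
  | of_succ k hk _ =>
    have hYk : Y k = G k ⊔ μ[Y (k + 1)|ℱ k] := funext (hY.2 k hk)
    exact hYk ▸ (hG k).sup integrable_condExp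

theorem ae_le_condExp_sup'_add [IsFiniteMeasure μ] (hY : IsSnellEnvelope μ ℱ N G Y)
    (hGadapted : Adapted ℱ G) (hGint : ∀ n, Integrable (G n) μ) {M : ℕ → Ω → ℝ}
    (hM : IsFinMartingale μ ℱ N M) {k : ℕ} (hk : k ≤ N) :
    Y k ≤ᵐ[μ] μ[fun ω => (Finset.Icc k N).sup' (Finset.nonempty_Icc.mpr hk)
      (fun m => G m ω - M m ω)|ℱ k] + M k := by
  have hHint := fun k (hk : k ≤ N) => hM.integrable_sup'_sub hGint hk
  obtain ⟨hMadapted, hMint, hMmart⟩ := hM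
  have hGM_le : ∀ k (hk : k ≤ N), G k - M k ≤ᵐ[μ] μ[fun ω => (Finset.Icc k N).sup'
      (Finset.nonempty_Icc.mpr hk) (fun m => G m ω - M m ω)|ℱ k] := fun k hk =>
    ae_le_condExp_of_stronglyMeasurable (ℱ.le k)
      ((hGadapted k).stronglyMeasurable.sub (hMadapted k hk)) ((hGint k).sub (hMint k hk))
      (hHint k hk) (Eventually.of_forall fun ω =>
        Finset.le_sup' (fun m => G m ω - M m ω) (Finset.mem_Icc.mpr ⟨le_rfl, hk⟩))
  induction hk using Nat.decreasingInduction with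
  | self =>
    filter_upwards [hGM_le N le_rfl] with ω h
    simp only [Pi.add_apply, Pi.sub_apply, hY.1 ω] at h ⊢
    linarith
  | of_succ k hk ih =>
    have hcond := condExp_le_condExp_add_of_martingale_step (ℱ.mono k.le_succ) (ℱ.le (k + 1))
      (hY.integrable hGint hk) (hHint k hk.le) (hHint (k + 1) hk) (hMint (k + 1) hk) ih
      (Eventually.of_forall fun ω => Finset.sup'_mono (fun m => G m ω - M m ω)
        (Finset.Icc_subset_Icc k.le_succ le_rfl) _) (hMmart k hk)
    filter_upwards [hGM_le k hk.le, hcond] with ω hG hcond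
    simp only [Pi.add_apply, Pi.sub_apply] at hG hcond ⊢
    rw [hY.2 k hk ω]
    exact max_le (by linarith) hcond

end IsSnellEnvelope

theorem weak_duality_general
    {Ω : Type*} {m0 : MeasurableSpace Ω} {μ : Measure Ω} [IsProbabilityMeasure μ]
    (N : ℕ) (ℱ : Filtration ℕ m0)
    (G : ℕ → Ω → ℝ) (hGadapted : Adapted ℱ G) (hGint : ∀ n, Integrable (G n) μ)
    (Y : ℕ → Ω → ℝ)
    (hYN : ∀ ω, Y N ω = G N ω)
    (hYrec : ∀ n, n < N → ∀ ω, Y n ω = max (G n ω) ((μ[Y (n + 1)|ℱ n]) ω))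
    (M : ℕ → Ω → ℝ) (hM : IsFinMartingale μ ℱ N M)
    (n : ℕ) (hn : n ≤ N) :
    Y n ≤ᵐ[μ]
      μ[fun ω => (Finset.Icc n N).sup' (Finset.nonempty_Icc.mpr hn)
        (fun m => G m ω - M m ω + M n ω)|ℱ n] := by
  have hY : IsSnellEnvelope μ ℱ N G Y := ⟨hYN, hYrec⟩
  simp_rw [← Finset.sup'_add]
  have h_pull_out := condExp_add_stronglyMeasurable (ℱ.le n) (hM.integrable_sup'_sub hGint hn)
    (hM.1 n hn) (hM.2.1 n hn)
  filter_upwards [hY.ae_le_condExp_sup'_add hGadapted hGint hM hn, h_pull_out] with ω hle heq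
  exact hle.trans_eq heq.symm

/-- Weak duality: for every martingale `M` and every `n ≤ N`, the Snell envelope
`Y n` is a.s. bounded above by the conditional expectation (given `ℱ n`) of
`max_{n ≤ m ≤ N} (G m − M m + M n)`. -/
theorem weak_duality
    {Ω : Type*} {m0 : MeasurableSpace Ω} {μ : Measure Ω} [IsProbabilityMeasure μ]
    (N : ℕ) (hN : 1 ≤ N) (ℱ : Filtration ℕ m0)
    (G : ℕ → Ω → ℝ) (hGadapted : Adapted ℱ G) (hGint : ∀ n, Integrable (G n) μ)
    (Y : ℕ → Ω → ℝ)
    (hYN : ∀ ω, Y N ω = G N ω)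
    (hYrec : ∀ n, n < N → ∀ ω, Y n ω = max (G n ω) ((μ[Y (n + 1)|ℱ n]) ω))
    (M : ℕ → Ω → ℝ) (hM : IsFinMartingale μ ℱ N M)
    (n : ℕ) (hn : n ≤ N) :
    Y n ≤ᵐ[μ]
      μ[fun ω => (Finset.Icc n N).sup' (Finset.nonempty_Icc.mpr hn)
        (fun m => G m ω - M m ω + M n ω)|ℱ n] :=
  weak_duality_general N ℱ G hGadapted hGint Y hYN hYrec M hM n hn
end

section
/- Surely optimal martingale: if each G_n is integrable, then for every 0 ≤ n ≤ N it holds ℙ-almost surely that Y*_n = max_{n ≤ m ≤ N} (G_m − M*_m + M*_n), where M* is the Doob martingale of the Snell envelope; i.e., the Doob martingale achieves the dual upper bound pathwise, without conditional expectation. -/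
open MeasureTheory Filter

/-- Surely optimal martingale: the Doob martingale `Mstar` of the Snell envelope
achieves the dual upper bound pathwise: for every `n ≤ N`, a.s.
`Y n = max_{n ≤ m ≤ N} (G m − Mstar m + Mstar n)`. -/
theorem surely_optimal
    {Ω : Type*} {m0 : MeasurableSpace Ω} {μ : Measure Ω} [IsProbabilityMeasure μ]
    (N : ℕ) (hN : 1 ≤ N) (ℱ : Filtration ℕ m0)
    (G : ℕ → Ω → ℝ) (hGadapted : Adapted ℱ G) (hGint : ∀ n, Integrable (G n) μ)
    (Y : ℕ → Ω → ℝ)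
    (hYN : ∀ ω, Y N ω = G N ω)
    (hYrec : ∀ n, n < N → ∀ ω, Y n ω = max (G n ω) ((μ[Y (n + 1)|ℱ n]) ω))
    (Mstar : ℕ → Ω → ℝ)
    (hMstar : ∀ n ω, Mstar n ω = ∑ m ∈ Finset.Icc 1 n, (Y m ω - (μ[Y m|ℱ (m - 1)]) ω))
    (n : ℕ) (hn : n ≤ N) :
    ∀ᵐ ω ∂μ, Y n ω = (Finset.Icc n N).sup' (Finset.nonempty_Icc.mpr hn)
        (fun m => G m ω - Mstar m ω + Mstar n ω) := by
  -- Increment identity for Mstar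
  have hinc : ∀ k ω, Mstar (k + 1) ω = Mstar k ω + (Y (k + 1) ω - (μ[Y (k + 1)|ℱ k]) ω) := by
    intro k ω
    rw [hMstar, hMstar, Finset.sum_Icc_succ_top (by omega : 1 ≤ k + 1)]
    simp
  have key : ∀ d n (h : n + d = N) (hn : n ≤ N) ω,
      Y n ω = (Finset.Icc n N).sup' (Finset.nonempty_Icc.mpr hn)
        (fun m => G m ω - Mstar m ω + Mstar n ω) := by
    intro d
    induction d with
    | zero =>
      intro n h hn ω
      have : n = N := by omega
      subst this
      simp [hYN ω]
    | succ d ih =>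
      intro n h hn ω
      have hnN : n < N := by omega
      have h1 : n + 1 ≤ N := by omega
      have ihω := ih (n + 1) (by omega) h1 ω
      -- rewrite conditional expectation via Mstar increment
      have hce : (μ[Y (n + 1)|ℱ n]) ω = Y (n + 1) ω - Mstar (n + 1) ω + Mstar n ω := by
        have := hinc n ω; linarith
      have hsupadd : ∀ (c : ℝ),
          (Finset.Icc (n + 1) N).sup' (Finset.nonempty_Icc.mpr h1)
            (fun m => G m ω - Mstar m ω + Mstar (n + 1) ω) + c
          = (Finset.Icc (n + 1) N).sup' (Finset.nonempty_Icc.mpr h1)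
            (fun m => (G m ω - Mstar m ω + Mstar (n + 1) ω) + c) := by
        intro c
        exact Finset.comp_sup'_eq_sup'_comp _ (fun x => x + c) (fun x y => (max_add_add_right x y c).symm)
      have hYval : Y (n + 1) ω - Mstar (n + 1) ω + Mstar n ω
          = (Finset.Icc (n + 1) N).sup' (Finset.nonempty_Icc.mpr h1)
            (fun m => G m ω - Mstar m ω + Mstar n ω) := by
        rw [ihω]
        have : Y (n+1) ω = Y (n+1) ω := rfl
        rw [show ((Finset.Icc (n + 1) N).sup' (Finset.nonempty_Icc.mpr h1)
            (fun m => G m ω - Mstar m ω + Mstar (n + 1) ω)) - Mstar (n+1) ω + Mstar n ω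
          = (Finset.Icc (n + 1) N).sup' (Finset.nonempty_Icc.mpr h1)
            (fun m => G m ω - Mstar m ω + Mstar (n + 1) ω) + (Mstar n ω - Mstar (n+1) ω) by ring,
          hsupadd]
        congr 1
        ext m
        ring
      have hins : Finset.Icc n N = insert n (Finset.Icc (n + 1) N) := by
        rw [Finset.Icc_add_one_left_eq_Ioc, Finset.Ioc_insert_left hn]
      rw [hYrec n hnN ω, hce, hYval]
      have : ((Finset.Icc n N).sup' (Finset.nonempty_Icc.mpr hn)
          (fun m => G m ω - Mstar m ω + Mstar n ω))
          = max (G n ω - Mstar n ω + Mstar n ω)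
            ((Finset.Icc (n + 1) N).sup' (Finset.nonempty_Icc.mpr h1)
              (fun m => G m ω - Mstar m ω + Mstar n ω)) := by
        rw [Finset.sup'_congr (Finset.nonempty_Icc.mpr hn) hins (fun _ _ => rfl)]
        exact Finset.sup'_insert (Finset.nonempty_Icc.mpr h1) _
      rw [this]
      congr 1
      ring
  exact ae_of_all μ (key (N - n) n (by omega) hn)
end

section
/- Accumulated approximation error for the dual upper bound: let M₁ and M₂ be two processes of square-integrable real random variables with M₁₀ = M₂₀ and suppose ε > 0 satisfies (𝔼|ξ_n(M₁) − ξ_n(M₂)|²)^{1/2} ≤ ε for every 0 ≤ n ≤ N−1. If each G_n is square-integrable, then for every 0 ≤ n ≤ N, 𝔼|Ũ_n(M₁) − Ũ_n(M₂)| ≤ (N − n)·ε. -/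
/-! The payoff `G` cancels in `Ũ_n(M₁) − Ũ_n(M₂)`: on each index `m` the two maximands differ by
`Δ_n − Δ_m` with `Δ = M₁ − M₂`, and `|Δ_m − Δ_n|` is at most the total variation of `Δ` on
`[n, N]`, i.e. `∑_{k=n}^{N-1} |ξ_k(M₁) − ξ_k(M₂)|`. Taking expectations, each summand is bounded
in `L¹` by its `L²` norm, hence by `ε`. -/

open MeasureTheory

/-- The dual upper-bound process `Ũ_n(M)(ω) = max_{n ≤ m ≤ N} (G m ω − M m ω + M n ω)`. -/
noncomputable def dualU {Ω : Type*} (N : ℕ) (G M : ℕ → Ω → ℝ) (n : ℕ) (hn : n ≤ N)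
    (ω : Ω) : ℝ :=
  (Finset.Icc n N).sup' (Finset.nonempty_Icc.mpr hn) fun m => G m ω - M m ω + M n ω

namespace Finset

variable {ι : Type*} {s : Finset ι} {f g : ι → ℝ} {C : ℝ}

lemma sup'_le_sup'_add (hs : s.Nonempty) (h : ∀ i ∈ s, f i ≤ g i + C) :
    s.sup' hs f ≤ s.sup' hs g + C :=
  sup'_le _ _ fun i hi => (h i hi).trans (add_le_add_left (le_sup' g hi) C)

lemma abs_sup'_sub_sup'_le (hs : s.Nonempty) (h : ∀ i ∈ s, |f i - g i| ≤ C) :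
    |s.sup' hs f - s.sup' hs g| ≤ C :=
  abs_sub_le_iff.mpr
    ⟨sub_le_iff_le_add'.mpr <| sup'_le_sup'_add hs fun i hi =>
        sub_le_iff_le_add'.mp (abs_sub_le_iff.mp (h i hi)).1,
      sub_le_iff_le_add'.mpr <| sup'_le_sup'_add hs fun i hi =>
        sub_le_iff_le_add'.mp (abs_sub_le_iff.mp (h i hi)).2⟩

end Finset

lemma abs_sub_le_sum_Ico_abs_sub (f : ℕ → ℝ) {n m N : ℕ} (hnm : n ≤ m) (hmN : m ≤ N) :
    |f m - f n| ≤ ∑ k ∈ Finset.Ico n N, |f (k + 1) - f k| :=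
  calc |f m - f n| = dist (f n) (f m) := by rw [Real.dist_eq, abs_sub_comm]
    _ ≤ ∑ k ∈ Finset.Ico n m, dist (f k) (f (k + 1)) := dist_le_Ico_sum_dist f hnm
    _ ≤ ∑ k ∈ Finset.Ico n N, dist (f k) (f (k + 1)) :=
      Finset.sum_le_sum_of_subset_of_nonneg (Finset.Ico_subset_Ico_right hmN)
        fun _ _ _ => dist_nonneg
    _ = ∑ k ∈ Finset.Ico n N, |f (k + 1) - f k| := by
      simp only [Real.dist_eq, abs_sub_comm]

lemma abs_dualU_sub_dualU_le {Ω : Type*} (N : ℕ) (G M₁ M₂ : ℕ → Ω → ℝ) (n : ℕ) (hn : n ≤ N)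
    (ω : Ω) :
    |dualU N G M₁ n hn ω - dualU N G M₂ n hn ω| ≤
      ∑ k ∈ Finset.Ico n N, |(M₁ (k + 1) ω - M₁ k ω) - (M₂ (k + 1) ω - M₂ k ω)| := by
  refine Finset.abs_sup'_sub_sup'_le _ fun m hm => ?_
  obtain ⟨hnm, hmN⟩ := Finset.mem_Icc.mp hm
  have hΔ := abs_sub_le_sum_Ico_abs_sub (fun k => M₁ k ω - M₂ k ω) hnm hmN
  calc |G m ω - M₁ m ω + M₁ n ω - (G m ω - M₂ m ω + M₂ n ω)|
      = |(M₁ m ω - M₂ m ω) - (M₁ n ω - M₂ n ω)| := by rw [abs_sub_comm]; congr 1; ring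
    _ ≤ _ := hΔ.trans_eq (Finset.sum_congr rfl fun k _ => by congr 1; ring)

lemma integral_abs_le_sqrt_integral_sq {Ω : Type*} [MeasurableSpace Ω] {μ : Measure Ω}
    [IsProbabilityMeasure μ] {f : Ω → ℝ} (hf : MemLp f 2 μ) :
    ∫ ω, |f ω| ∂μ ≤ √(∫ ω, |f ω| ^ 2 ∂μ) := by
  apply Real.le_sqrt_of_sq_le
  have hvar := ProbabilityTheory.variance_eq_sub hf.abs
  have := ProbabilityTheory.variance_nonneg |f| μ
  simp only [Pi.pow_apply, Pi.abs_apply] at hvar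
  linarith

theorem accumulated_dual_error_general
    {Ω : Type*} [MeasurableSpace Ω] (μ : Measure Ω) [IsProbabilityMeasure μ]
    (N : ℕ) (G M₁ M₂ : ℕ → Ω → ℝ)
    (hM₁ : ∀ n, n ≤ N → MemLp (M₁ n) 2 μ)
    (hM₂ : ∀ n, n ≤ N → MemLp (M₂ n) 2 μ)
    (ε : ℝ)
    (hξ : ∀ n, n < N →
      Real.sqrt (∫ ω, |(M₁ (n + 1) ω - M₁ n ω) - (M₂ (n + 1) ω - M₂ n ω)| ^ 2 ∂μ) ≤ ε)
    (n : ℕ) (hn : n ≤ N) :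
    ∫ ω, |dualU N G M₁ n hn ω - dualU N G M₂ n hn ω| ∂μ ≤ ((N - n : ℕ) : ℝ) * ε := by
  have hmem : ∀ k ∈ Finset.Ico n N,
      MemLp (fun ω => (M₁ (k + 1) ω - M₁ k ω) - (M₂ (k + 1) ω - M₂ k ω)) 2 μ := fun k hk => by
    have hk := (Finset.mem_Ico.mp hk).2
    exact ((hM₁ _ hk).sub (hM₁ k hk.le)).sub ((hM₂ _ hk).sub (hM₂ k hk.le))
  have hint : ∀ k ∈ Finset.Ico n N, Integrable
      (fun ω => |(M₁ (k + 1) ω - M₁ k ω) - (M₂ (k + 1) ω - M₂ k ω)|) μ := fun k hk =>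
    ((hmem k hk).integrable one_le_two).abs
  calc ∫ ω, |dualU N G M₁ n hn ω - dualU N G M₂ n hn ω| ∂μ
      ≤ ∫ ω, ∑ k ∈ Finset.Ico n N, |(M₁ (k + 1) ω - M₁ k ω) - (M₂ (k + 1) ω - M₂ k ω)| ∂μ :=
        integral_mono_of_nonneg (.of_forall fun _ => abs_nonneg _)
          (integrable_finsetSum _ hint) (.of_forall (abs_dualU_sub_dualU_le N G M₁ M₂ n hn))
    _ = ∑ k ∈ Finset.Ico n N,
          ∫ ω, |(M₁ (k + 1) ω - M₁ k ω) - (M₂ (k + 1) ω - M₂ k ω)| ∂μ :=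
        integral_finsetSum _ hint
    _ ≤ ∑ k ∈ Finset.Ico n N, ε := Finset.sum_le_sum fun k hk =>
        (integral_abs_le_sqrt_integral_sq (hmem k hk)).trans (hξ k (Finset.mem_Ico.mp hk).2)
    _ = ((N - n : ℕ) : ℝ) * ε := by simp

/-- Accumulated approximation error for the dual upper bound: if `M₁ 0 = M₂ 0` and
`(𝔼|ξ_n(M₁) − ξ_n(M₂)|²)^{1/2} ≤ ε` for every `n < N`, with all `G n`, `M₁ n`, `M₂ n`
square-integrable, then for every `n ≤ N`, `𝔼|Ũ_n(M₁) − Ũ_n(M₂)| ≤ (N − n)·ε`. -/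
theorem accumulated_dual_error
    {Ω : Type*} [MeasurableSpace Ω] (μ : Measure Ω) [IsProbabilityMeasure μ]
    (N : ℕ) (hN : 1 ≤ N) (G M₁ M₂ : ℕ → Ω → ℝ)
    (hG : ∀ n, n ≤ N → MemLp (G n) 2 μ)
    (hM₁ : ∀ n, n ≤ N → MemLp (M₁ n) 2 μ)
    (hM₂ : ∀ n, n ≤ N → MemLp (M₂ n) 2 μ)
    (hM0 : ∀ ω, M₁ 0 ω = M₂ 0 ω)
    (ε : ℝ) (hε : 0 < ε)
    (hξ : ∀ n, n < N →
      Real.sqrt (∫ ω, |(M₁ (n + 1) ω - M₁ n ω) - (M₂ (n + 1) ω - M₂ n ω)| ^ 2 ∂μ) ≤ ε)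
    (n : ℕ) (hn : n ≤ N) :
    ∫ ω, |dualU N G M₁ n hn ω - dualU N G M₂ n hn ω| ∂μ ≤ ((N - n : ℕ) : ℝ) * ε :=
  accumulated_dual_error_general μ N G M₁ M₂ hM₁ hM₂ ε hξ n hn
end

section
/- Lipschitz propagation through one step of the value-function recursion: under the stated hypotheses, the function V'(x) := max( g(x), 𝔼[V(ξ^x)] ) is well defined and satisfies |V'(x) − V'(y)| ≤ 2·K_g·‖x − y‖ + K_V·(𝔼[‖ξ^x − ξ^y‖²])^{1/2} for all x, y ∈ ℝ^D; in particular, if (𝔼[‖ξ^x − ξ^y‖²])^{1/2} ≤ L·‖x − y‖ for all x, y, then V' is (2·K_g + K_V·L)-Lipschitz. -/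
open MeasureTheory ProbabilityTheory

/-! Since `|max a b − max c d| ≤ max |a − c| |b − d|`, it suffices to control `g` and
`x ↦ 𝔼[V (ξ x)]` separately. For the expectation, the Lipschitz bound on `V`
gives `|𝔼 V(ξ x) − 𝔼 V(ξ y)| ≤ K_V 𝔼‖ξ x − ξ y‖`, and on a probability space the `L¹` norm is
dominated by the `L²` norm, because a variance is nonnegative. -/

section

variable {Ω E F : Type*} [MeasurableSpace Ω] {μ : Measure Ω}

theorem integral_le_sqrt_integral_sq [IsProbabilityMeasure μ] {X : Ω → ℝ} (hX : MemLp X 2 μ) :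
    ∫ ω, X ω ∂μ ≤ Real.sqrt (∫ ω, X ω ^ 2 ∂μ) := by
  refine Real.le_sqrt_of_sq_le ?_
  have h := variance_nonneg X μ
  rw [variance_eq_sub hX] at h
  simpa only [Pi.pow_apply, sub_nonneg] using h

namespace LipschitzWith

variable [NormedAddCommGroup E] [NormedAddCommGroup F] {K : NNReal} {f : E → F}

theorem memLp_comp [IsFiniteMeasure μ] {p : ENNReal} (hf : LipschitzWith K f) {X : Ω → E}
    (hX : MemLp X p μ) : MemLp (fun ω => f (X ω)) p μ := by
  have hf₀ : LipschitzWith (K + 0) (fun a => f a - f 0) := hf.sub (LipschitzWith.const _)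
  convert (hf₀.comp_memLp (sub_self _) hX).add (memLp_const (f 0)) using 1
  ext ω
  simp

theorem norm_integral_comp_sub_le [NormedSpace ℝ F] [IsProbabilityMeasure μ]
    (hf : LipschitzWith K f) {X Y : Ω → E} (hX : MemLp X 2 μ) (hY : MemLp Y 2 μ) :
    ‖∫ ω, f (X ω) ∂μ - ∫ ω, f (Y ω) ∂μ‖ ≤ K * Real.sqrt (∫ ω, ‖X ω - Y ω‖ ^ 2 ∂μ) := by
  have hXY : MemLp (fun ω => ‖X ω - Y ω‖) 2 μ := (hX.sub hY).norm
  calc ‖∫ ω, f (X ω) ∂μ - ∫ ω, f (Y ω) ∂μ‖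
      = ‖∫ ω, (f (X ω) - f (Y ω)) ∂μ‖ := by
        rw [integral_sub ((hf.memLp_comp hX).integrable one_le_two)
          ((hf.memLp_comp hY).integrable one_le_two)]
    _ ≤ ∫ ω, ‖f (X ω) - f (Y ω)‖ ∂μ := norm_integral_le_integral_norm _
    _ ≤ ∫ ω, K * ‖X ω - Y ω‖ ∂μ :=
        integral_mono_of_nonneg (.of_forall fun _ => norm_nonneg _)
          ((hXY.integrable one_le_two).const_mul _) (.of_forall fun _ => hf.norm_sub_le _ _)
    _ = K * ∫ ω, ‖X ω - Y ω‖ ∂μ := integral_const_mul _ _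
    _ ≤ K * Real.sqrt (∫ ω, ‖X ω - Y ω‖ ^ 2 ∂μ) := by
        gcongr
        exact integral_le_sqrt_integral_sq hXY

end LipschitzWith

end

theorem lipschitz_value_recursion_step_general
    {Ω : Type*} [MeasurableSpace Ω] (P : Measure Ω) [IsProbabilityMeasure P]
    (D : ℕ)
    (g V : EuclideanSpace ℝ (Fin D) → ℝ) (Kg KV : ℝ) (hKV : 0 ≤ KV)
    (hg : ∀ x y, |g x - g y| ≤ Kg * ‖x - y‖)
    (hV : ∀ x y, |V x - V y| ≤ KV * ‖x - y‖)
    (ξ : EuclideanSpace ℝ (Fin D) → Ω → EuclideanSpace ℝ (Fin D))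
    (hξ2 : ∀ x, MemLp (ξ x) 2 P) :
    (∀ x, Integrable (fun ω => V (ξ x ω)) P) ∧
    (∀ x y, |max (g x) (∫ ω, V (ξ x ω) ∂P) - max (g y) (∫ ω, V (ξ y ω) ∂P)|
        ≤ 2 * Kg * ‖x - y‖ + KV * Real.sqrt (∫ ω, ‖ξ x ω - ξ y ω‖ ^ 2 ∂P)) ∧
    (∀ L : ℝ, (∀ x y, Real.sqrt (∫ ω, ‖ξ x ω - ξ y ω‖ ^ 2 ∂P) ≤ L * ‖x - y‖) →
      ∀ x y, |max (g x) (∫ ω, V (ξ x ω) ∂P) - max (g y) (∫ ω, V (ξ y ω) ∂P)|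
        ≤ (2 * Kg + KV * L) * ‖x - y‖) := by
  have hVlip : LipschitzWith ⟨KV, hKV⟩ V :=
    .of_dist_le_mul fun a b => by rw [Real.dist_eq, dist_eq_norm]; exact hV a b
  have hstep : ∀ x y, |max (g x) (∫ ω, V (ξ x ω) ∂P) - max (g y) (∫ ω, V (ξ y ω) ∂P)|
      ≤ 2 * Kg * ‖x - y‖ + KV * Real.sqrt (∫ ω, ‖ξ x ω - ξ y ω‖ ^ 2 ∂P) := by
    intro x y
    have hg₀ : 0 ≤ Kg * ‖x - y‖ := (abs_nonneg _).trans (hg x y)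
    have hsqrt₀ : 0 ≤ KV * Real.sqrt (∫ ω, ‖ξ x ω - ξ y ω‖ ^ 2 ∂P) := by positivity
    have hEV : |∫ ω, V (ξ x ω) ∂P - ∫ ω, V (ξ y ω) ∂P|
        ≤ KV * Real.sqrt (∫ ω, ‖ξ x ω - ξ y ω‖ ^ 2 ∂P) :=
      hVlip.norm_integral_comp_sub_le (hξ2 x) (hξ2 y)
    refine (abs_max_sub_max_le_max _ _ _ _).trans (max_le ?_ ?_) <;> linarith [hg x y]
  refine ⟨fun x => (hVlip.memLp_comp (hξ2 x)).integrable one_le_two, hstep, ?_⟩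
  intro L hL x y
  have hKVL := mul_le_mul_of_nonneg_left (hL x y) hKV
  linarith [hstep x y]

/-- Lipschitz propagation through one step of the value-function recursion: with
`g` `Kg`-Lipschitz, `V` `KV`-Lipschitz and `ξ x ∈ L²` for every `x`, the function
`V' x = max (g x) (𝔼[V (ξ x)])` is well defined (each `V (ξ x)` is integrable) and
`|V' x − V' y| ≤ 2·Kg·‖x − y‖ + KV·(𝔼‖ξ x − ξ y‖²)^{1/2}`; in particular, if
`(𝔼‖ξ x − ξ y‖²)^{1/2} ≤ L·‖x − y‖` for all `x, y`, then `V'` is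
`(2·Kg + KV·L)`-Lipschitz. -/
theorem lipschitz_value_recursion_step
    {Ω : Type*} [MeasurableSpace Ω] (P : Measure Ω) [IsProbabilityMeasure P]
    (D : ℕ) (hD : 1 ≤ D)
    (g V : EuclideanSpace ℝ (Fin D) → ℝ) (Kg KV : ℝ) (hKg : 0 ≤ Kg) (hKV : 0 ≤ KV)
    (hg : ∀ x y, |g x - g y| ≤ Kg * ‖x - y‖)
    (hV : ∀ x y, |V x - V y| ≤ KV * ‖x - y‖)
    (ξ : EuclideanSpace ℝ (Fin D) → Ω → EuclideanSpace ℝ (Fin D))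
    (hξmeas : Measurable (Function.uncurry ξ))
    (hξ2 : ∀ x, MemLp (ξ x) 2 P) :
    (∀ x, Integrable (fun ω => V (ξ x ω)) P) ∧
    (∀ x y, |max (g x) (∫ ω, V (ξ x ω) ∂P) - max (g y) (∫ ω, V (ξ y ω) ∂P)|
        ≤ 2 * Kg * ‖x - y‖ + KV * Real.sqrt (∫ ω, ‖ξ x ω - ξ y ω‖ ^ 2 ∂P)) ∧
    (∀ L : ℝ, (∀ x y, Real.sqrt (∫ ω, ‖ξ x ω - ξ y ω‖ ^ 2 ∂P) ≤ L * ‖x - y‖) →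
      ∀ x y, |max (g x) (∫ ω, V (ξ x ω) ∂P) - max (g y) (∫ ω, V (ξ y ω) ∂P)|
        ≤ (2 * Kg + KV * L) * ‖x - y‖) :=
  lipschitz_value_recursion_step_general P D g V Kg KV hKV hg hV ξ hξ2
end
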